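/- arXiv:2108.00300 — 7 statements merged into one kernel-verified Lean document; each statement's English description precedes it below -/
import Mathlib

section
/- The map (m,n) ↦ d_{m,n} is a metric on ℕ ∪ {-1}: it is symmetric, satisfies the triangle inequality d_{m,n} ≤ d_{m,p} + d_{p,n}, and d_{m,n} > 0 whenever m ≠ n. -/
/-- `p` is a probability distribution on `ℕ` supported on `{0,…,n}`. -/
def IsProbOn (p : ℕ → ℝ) (n : ℕ) : Prop :=
  (∀ i, 0 ≤ p i) ∧ (∀ i, n < i → p i = 0) ∧ ∑ i ∈ Finset.range (n + 1), p i = 1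

/-- `z` is a transport plan from `μ` (supported on `{0,…,m}`) to `ν` (supported on `{0,…,n}`):
a nonnegative matrix on the rectangle `{0,…,m} × {0,…,n}` with row sums `μ` and column sums `ν`. -/
def IsPlan (μ ν : ℕ → ℝ) (m n : ℕ) (z : ℕ → ℕ → ℝ) : Prop :=
  (∀ i j, 0 ≤ z i j) ∧
  (∀ i j, m < i ∨ n < j → z i j = 0) ∧
  (∀ i, i ≤ m → ∑ j ∈ Finset.range (n + 1), z i j = μ i) ∧
  (∀ j, j ≤ n → ∑ i ∈ Finset.range (m + 1), z i j = ν j)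

/-- Transport cost of the plan `z` with ground cost `(i,j) ↦ D i j` (where `D i j`
encodes `d_{i-1,j-1}` of the paper, indices shifted by one so that `0` plays the role of `-1`). -/
noncomputable def cost (D : ℕ → ℕ → ℝ) (m n : ℕ) (z : ℕ → ℕ → ℝ) : ℝ :=
  ∑ i ∈ Finset.range (m + 1), ∑ j ∈ Finset.range (n + 1), z i j * D i j

lemma planColZero {μ ν : ℕ → ℝ} {m n : ℕ} {z : ℕ → ℕ → ℝ} (hz : IsPlan μ ν m n z)
    {k : ℕ} (hk : k ≤ n) (hν : ν k = 0) (i : ℕ) : z i k = 0 := by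
  rcases le_or_gt i m with him | him
  · have hsum := hz.2.2.2 k hk
    rw [hν] at hsum
    exact (Finset.sum_eq_zero_iff_of_nonneg (fun i _ => hz.1 i k)).mp hsum i
      (Finset.mem_range.mpr (Nat.lt_succ_of_le him))
  · exact hz.2.1 i k (Or.inl him)

lemma planRowZero {μ ν : ℕ → ℝ} {m n : ℕ} {z : ℕ → ℕ → ℝ} (hz : IsPlan μ ν m n z)
    {k : ℕ} (hk : k ≤ m) (hμ : μ k = 0) (j : ℕ) : z k j = 0 := by
  rcases le_or_gt j n with hjn | hjn
  · have hsum := hz.2.2.1 k hk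
    rw [hμ] at hsum
    exact (Finset.sum_eq_zero_iff_of_nonneg (fun j _ => hz.1 k j)).mp hsum j
      (Finset.mem_range.mpr (Nat.lt_succ_of_le hjn))
  · exact hz.2.1 k j (Or.inr hjn)

lemma transposePlan {μ ν : ℕ → ℝ} {m n : ℕ} {z : ℕ → ℕ → ℝ} (hz : IsPlan μ ν m n z) :
    IsPlan ν μ n m (fun i j => z j i) :=
  ⟨fun i j => hz.1 j i, fun i j h => hz.2.1 j i h.symm, hz.2.2.2, hz.2.2.1⟩

lemma glue (D : ℕ → ℕ → ℝ) (μ ν ρ : ℕ → ℝ) (m p n : ℕ) (x y : ℕ → ℕ → ℝ)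
    (hx : IsPlan μ ν m p x) (hy : IsPlan ν ρ p n y)
    (htri : ∀ i, i ≤ m → ∀ k, k ≤ p → ∀ j, j ≤ n → D i j ≤ D i k + D k j) :
    ∃ z, IsPlan μ ρ m n z ∧ cost D m n z ≤ cost D m p x + cost D p n y := by
  set t : ℕ → ℕ → ℕ → ℝ := fun i k j => if ν k = 0 then 0 else x i k * y k j / ν k with ht
  have hν : ∀ k, k ≤ p → 0 ≤ ν k := by
    intro k hk
    rw [← hx.2.2.2 k hk]
    exact Finset.sum_nonneg fun i _ => hx.1 i k
  have ht_nonneg : ∀ i k j, k ≤ p → 0 ≤ t i k j := by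
    intro i k j hk
    by_cases h : ν k = 0
    · simp [ht, h]
    · simp only [ht, if_neg h]
      exact div_nonneg (mul_nonneg (hx.1 i k) (hy.1 k j)) (hν k hk)
  have htj : ∀ i k, k ≤ p → ∑ j ∈ Finset.range (n + 1), t i k j = x i k := by
    intro i k hk
    by_cases h : ν k = 0
    · simp [ht, h, planColZero hx hk h i]
    · simp only [ht, if_neg h]
      rw [← Finset.sum_div, ← Finset.mul_sum, hy.2.2.1 k hk]
      field_simp
  have hti : ∀ k j, k ≤ p → j ≤ n → ∑ i ∈ Finset.range (m + 1), t i k j = y k j := by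
    intro k j hk hj
    by_cases h : ν k = 0
    · simp [ht, h, planRowZero hy hk h j]
    · simp only [ht, if_neg h]
      rw [← Finset.sum_div]
      rw [show ∑ i ∈ Finset.range (m+1), x i k * y k j = (∑ i ∈ Finset.range (m+1), x i k) * y k j from (Finset.sum_mul ..).symm]
      rw [hx.2.2.2 k hk]
      field_simp
  refine ⟨fun i j => ∑ k ∈ Finset.range (p + 1), t i k j, ⟨?_, ?_, ?_, ?_⟩, ?_⟩
  · intro i j
    exact Finset.sum_nonneg fun k hk => ht_nonneg i k j (Nat.lt_succ_iff.mp (Finset.mem_range.mp hk))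
  · intro i j h
    apply Finset.sum_eq_zero
    intro k _
    rcases h with h | h
    · have := hx.2.1 i k (Or.inl h)
      simp [ht, this]
    · have := hy.2.1 k j (Or.inr h)
      simp [ht, this]
  · intro i hi
    rw [Finset.sum_comm]
    calc ∑ k ∈ Finset.range (p+1), ∑ j ∈ Finset.range (n+1), t i k j
        = ∑ k ∈ Finset.range (p+1), x i k := by
          apply Finset.sum_congr rfl
          intro k hk
          exact htj i k (Nat.lt_succ_iff.mp (Finset.mem_range.mp hk))
      _ = μ i := hx.2.2.1 i hi
  · intro j hj
    rw [Finset.sum_comm]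
    calc ∑ k ∈ Finset.range (p+1), ∑ i ∈ Finset.range (m+1), t i k j
        = ∑ k ∈ Finset.range (p+1), y k j := by
          apply Finset.sum_congr rfl
          intro k hk
          exact hti k j (Nat.lt_succ_iff.mp (Finset.mem_range.mp hk)) hj
      _ = ρ j := hy.2.2.2 j hj
  · unfold cost
    have step1 : ∑ i ∈ Finset.range (m+1), ∑ j ∈ Finset.range (n+1),
          (∑ k ∈ Finset.range (p+1), t i k j) * D i j
        ≤ ∑ i ∈ Finset.range (m+1), ∑ j ∈ Finset.range (n+1),
          ∑ k ∈ Finset.range (p+1), t i k j * (D i k + D k j) := by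
      apply Finset.sum_le_sum
      intro i hi
      apply Finset.sum_le_sum
      intro j hj
      rw [Finset.sum_mul]
      apply Finset.sum_le_sum
      intro k hk
      have hi' := Nat.lt_succ_iff.mp (Finset.mem_range.mp hi)
      have hj' := Nat.lt_succ_iff.mp (Finset.mem_range.mp hj)
      have hk' := Nat.lt_succ_iff.mp (Finset.mem_range.mp hk)
      exact mul_le_mul_of_nonneg_left (htri i hi' k hk' j hj') (ht_nonneg i k j hk')
    refine step1.trans (le_of_eq ?_)
    have split : ∀ i j, ∑ k ∈ Finset.range (p+1), t i k j * (D i k + D k j)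
        = (∑ k ∈ Finset.range (p+1), t i k j * D i k)
          + ∑ k ∈ Finset.range (p+1), t i k j * D k j := by
      intro i j
      rw [← Finset.sum_add_distrib]
      apply Finset.sum_congr rfl
      intro k _
      ring
    simp only [split, Finset.sum_add_distrib]
    congr 1
    · -- ∑_i ∑_j ∑_k t * D i k = cost x
      apply Finset.sum_congr rfl
      intro i hi
      rw [Finset.sum_comm]
      apply Finset.sum_congr rfl
      intro k hk
      rw [← Finset.sum_mul, htj i k (Nat.lt_succ_iff.mp (Finset.mem_range.mp hk))]
    · -- ∑_i ∑_j ∑_k t * D k j = cost y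
      calc ∑ i ∈ Finset.range (m+1), ∑ j ∈ Finset.range (n+1),
            ∑ k ∈ Finset.range (p+1), t i k j * D k j
          = ∑ j ∈ Finset.range (n+1), ∑ i ∈ Finset.range (m+1),
            ∑ k ∈ Finset.range (p+1), t i k j * D k j := Finset.sum_comm
        _ = ∑ j ∈ Finset.range (n+1), ∑ k ∈ Finset.range (p+1), y k j * D k j := by
            apply Finset.sum_congr rfl
            intro j hj
            rw [Finset.sum_comm]
            apply Finset.sum_congr rfl
            intro k hk
            rw [← Finset.sum_mul, hti k j (Nat.lt_succ_iff.mp (Finset.mem_range.mp hk))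
              (Nat.lt_succ_iff.mp (Finset.mem_range.mp hj))]
        _ = ∑ k ∈ Finset.range (p+1), ∑ j ∈ Finset.range (n+1), y k j * D k j :=
            Finset.sum_comm
/-- `D` is the recursive optimal transport family associated with the weights `π`:
indices are shifted by one, so `D (m+1) (n+1) = d_{m,n}`, `D 0 (j+1) = d_{-1,j} = 1`,
`D 0 0 = d_{-1,-1} = 0`, and `d_{m,n}` is the minimum transport cost from `π m` to `π n`
with ground cost `(i,j) ↦ d_{i-1,j-1} = D i j`. -/
def IsRecursiveOT (π : ℕ → ℕ → ℝ) (D : ℕ → ℕ → ℝ) : Prop :=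
  D 0 0 = 0 ∧ (∀ j, D 0 (j + 1) = 1) ∧ (∀ i, D (i + 1) 0 = 1) ∧
  ∀ m n, IsLeast {c : ℝ | ∃ z, IsPlan (π m) (π n) m n z ∧ c = cost D m n z}
    (D (m + 1) (n + 1))

/-- Condition (H): `π_n^n > 0` and `π_i^n ≤ π_i^{n-1}` for `i < n`. -/
def CondH (π : ℕ → ℕ → ℝ) : Prop :=
  ∀ n, 0 < π (n + 1) (n + 1) ∧ ∀ i, i ≤ n → π (n + 1) i ≤ π n i

/-- `(m,n) ↦ d_{m,n}` is a metric on `ℕ ∪ {-1}` (indices shifted by one):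
it is symmetric, satisfies the triangle inequality, and is positive off the diagonal. -/
theorem recursiveOT_isMetric (π D : ℕ → ℕ → ℝ)
    (hπ : ∀ n, IsProbOn (π n) n)
    (hdist : ∀ m n : ℕ, m ≠ n → π m ≠ π n)
    (hD : IsRecursiveOT π D) :
    (∀ m n : ℕ, D m n = D n m) ∧
    (∀ m n p : ℕ, D m n ≤ D m p + D p n) ∧
    (∀ m n : ℕ, m ≠ n → 0 < D m n) := by
  obtain ⟨hD00, hD0r, hD0c, hmin⟩ := hD
  have hopt : ∀ m n, ∃ z, IsPlan (π m) (π n) m n z ∧ D (m+1) (n+1) = cost D m n z :=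
    fun m n => (hmin m n).1
  have hlb : ∀ m n z, IsPlan (π m) (π n) m n z → D (m+1) (n+1) ≤ cost D m n z :=
    fun m n z hz => (hmin m n).2 ⟨z, hz, rfl⟩
  -- total mass of a plan is 1
  have hmass : ∀ m n z, IsPlan (π m) (π n) m n z →
      ∑ i ∈ Finset.range (m+1), ∑ j ∈ Finset.range (n+1), z i j = 1 := by
    intro m n z hz
    rw [Finset.sum_congr rfl fun i hi =>
      hz.2.2.1 i (Nat.lt_succ_iff.mp (Finset.mem_range.mp hi))]
    exact (hπ m).2.2
  -- 0 ≤ D ≤ 2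
  have hbound : ∀ k m n, m + n ≤ k → 0 ≤ D m n ∧ D m n ≤ 2 := by
    intro k
    induction k with
    | zero =>
      intro m n h
      obtain ⟨rfl, rfl⟩ : m = 0 ∧ n = 0 := by omega
      rw [hD00]; norm_num
    | succ k ih =>
      intro m n hmn
      match m, n with
      | 0, 0 => rw [hD00]; norm_num
      | 0, n+1 => rw [hD0r]; norm_num
      | m+1, 0 => rw [hD0c]; norm_num
      | m+1, n+1 =>
        obtain ⟨z, hz, hzc⟩ := hopt m n
        have hIH : ∀ i ∈ Finset.range (m+1), ∀ j ∈ Finset.range (n+1),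
            0 ≤ D i j ∧ D i j ≤ 2 := by
          intro i hi j hj
          have hi' := Finset.mem_range.mp hi
          have hj' := Finset.mem_range.mp hj
          exact ih i j (by omega)
        constructor
        · rw [hzc]
          exact Finset.sum_nonneg fun i hi => Finset.sum_nonneg fun j hj =>
            mul_nonneg (hz.1 i j) (hIH i hi j hj).1
        · rw [hzc]
          calc cost D m n z
              ≤ ∑ i ∈ Finset.range (m+1), ∑ j ∈ Finset.range (n+1), z i j * 2 := by
                apply Finset.sum_le_sum
                intro i hi
                apply Finset.sum_le_sum
                intro j hj
                exact mul_le_mul_of_nonneg_left (hIH i hi j hj).2 (hz.1 i j)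
            _ = 2 := by
                simp only [← Finset.sum_mul]
                rw [hmass m n z hz, one_mul]
  have hnn : ∀ m n, 0 ≤ D m n := fun m n => (hbound (m+n) m n le_rfl).1
  have hle2 : ∀ m n, D m n ≤ 2 := fun m n => (hbound (m+n) m n le_rfl).2
  -- symmetry
  have hsymm : ∀ m n, D m n = D n m := by
    have key : ∀ k m n, m + n ≤ k → D m n = D n m := by
      intro k
      induction k with
      | zero =>
        intro m n h
        obtain ⟨rfl, rfl⟩ : m = 0 ∧ n = 0 := by omega
        rfl
      | succ k ih =>
        intro m n hmn
        match m, n with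
        | 0, 0 => rfl
        | 0, n+1 => rw [hD0r, hD0c]
        | m+1, 0 => rw [hD0r, hD0c]
        | m+1, n+1 =>
          have le1 : ∀ a b, a + b ≤ k → D (a+1) (b+1) ≤ D (b+1) (a+1) := by
            intro a b hab
            obtain ⟨w, hw, hwc⟩ := hopt b a
            have hwt := transposePlan hw
            refine (hlb a b _ hwt).trans (le_of_eq ?_)
            rw [hwc]
            unfold cost
            rw [Finset.sum_comm]
            apply Finset.sum_congr rfl
            intro j hj
            apply Finset.sum_congr rfl
            intro i hi
            have hi' := Finset.mem_range.mp hi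
            have hj' := Finset.mem_range.mp hj
            rw [ih i j (by omega)]
          have hk : m + n ≤ k := by omega
          exact le_antisymm (le1 m n hk) (le1 n m (by omega))
    exact fun m n => key (m+n) m n le_rfl
  -- triangle inequality
  have htri : ∀ m n p, D m n ≤ D m p + D p n := by
    have key : ∀ k m n p, m + n + p ≤ k → D m n ≤ D m p + D p n := by
      intro k
      induction k with
      | zero =>
        intro m n p h
        obtain ⟨rfl, rfl, rfl⟩ : m = 0 ∧ n = 0 ∧ p = 0 := by omega
        rw [hD00]; norm_num
      | succ k ih =>
        intro m n p hmnp
        match m, n, p with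
        | m, n, 0 =>
          match m, n with
          | 0, n => rw [hD00, zero_add]
          | m+1, 0 => rw [hD00, add_zero]
          | m+1, n+1 =>
            rw [hD0c, hD0r]
            calc D (m+1) (n+1) ≤ 2 := hle2 _ _
              _ = 1 + 1 := by norm_num
        | 0, 0, p+1 =>
          rw [hD00]
          exact add_nonneg (hnn _ _) (hnn _ _)
        | 0, n+1, p+1 =>
          rw [hD0r, hD0r]
          linarith [hnn (p+1) (n+1)]
        | m+1, 0, p+1 =>
          rw [hD0c, hD0c]
          linarith [hnn (m+1) (p+1)]
        | m+1, n+1, p+1 =>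
          obtain ⟨x, hx, hxc⟩ := hopt m p
          obtain ⟨y, hy, hyc⟩ := hopt p n
          have htriIH : ∀ i, i ≤ m → ∀ q, q ≤ p → ∀ j, j ≤ n → D i j ≤ D i q + D q j := by
            intro i hi q hq j hj
            exact ih i j q (by omega)
          obtain ⟨z, hzplan, hzcost⟩ := glue D (π m) (π p) (π n) m p n x y hx hy htriIH
          calc D (m+1) (n+1) ≤ cost D m n z := hlb m n z hzplan
            _ ≤ cost D m p x + cost D p n y := hzcost
            _ = D (m+1) (p+1) + D (p+1) (n+1) := by rw [hxc, hyc]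
    exact fun m n p => key (m+n+p) m n p le_rfl
  -- positivity
  have hpos : ∀ m n, m ≠ n → 0 < D m n := by
    have key : ∀ k m n, m + n ≤ k → m ≠ n → 0 < D m n := by
      intro k
      induction k with
      | zero => intro m n h hne; omega
      | succ k ih =>
        intro m n hmn hne
        match m, n with
        | 0, 0 => omega
        | 0, n+1 => rw [hD0r]; norm_num
        | m+1, 0 => rw [hD0c]; norm_num
        | m+1, n+1 =>
          have hmn' : m ≠ n := by omega
          rcases (hnn (m+1) (n+1)).lt_or_eq with h | h
          · exact h
          exfalso
          obtain ⟨z, hz, hzc⟩ := hopt m n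
          have hcost0 : cost D m n z = 0 := by rw [← hzc, ← h]
          have hterm : ∀ i ∈ Finset.range (m+1), ∀ j ∈ Finset.range (n+1),
              z i j * D i j = 0 := by
            intro i hi j hj
            have houter := (Finset.sum_eq_zero_iff_of_nonneg
              (fun i _ => Finset.sum_nonneg fun j _ =>
                mul_nonneg (hz.1 i j) (hnn i j))).mp hcost0 i hi
            exact (Finset.sum_eq_zero_iff_of_nonneg
              (fun j _ => mul_nonneg (hz.1 i j) (hnn i j))).mp houter j hj
          have hzdiag : ∀ i, i ≤ m → ∀ j, j ≤ n → i ≠ j → z i j = 0 := by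
            intro i hi j hj hij
            have hDpos : 0 < D i j := ih i j (by omega) hij
            have := hterm i (Finset.mem_range.mpr (by omega)) j (Finset.mem_range.mpr (by omega))
            rcases mul_eq_zero.mp this with h' | h'
            · exact h'
            · exact absurd h' (ne_of_gt hDpos)
          apply hdist m n hmn'
          funext i
          have hμ : ∀ i, i ≤ m → π m i = (if i ≤ n then z i i else 0) := by
            intro i hi
            rw [← hz.2.2.1 i hi]
            by_cases hin : i ≤ n
            · rw [if_pos hin]
              apply Finset.sum_eq_single_of_mem i (Finset.mem_range.mpr (by omega))
              intro j hj hji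
              exact hzdiag i hi j (Nat.lt_succ_iff.mp (Finset.mem_range.mp hj)) (Ne.symm hji)
            · rw [if_neg hin]
              apply Finset.sum_eq_zero
              intro j hj
              have hj' := Nat.lt_succ_iff.mp (Finset.mem_range.mp hj)
              exact hzdiag i hi j hj' (by omega)
          have hν : ∀ j, j ≤ n → π n j = (if j ≤ m then z j j else 0) := by
            intro j hj
            rw [← hz.2.2.2 j hj]
            by_cases hjm : j ≤ m
            · rw [if_pos hjm]
              apply Finset.sum_eq_single_of_mem j (Finset.mem_range.mpr (by omega))
              intro i hi hij
              exact hzdiag i (Nat.lt_succ_iff.mp (Finset.mem_range.mp hi)) j hj hij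
            · rw [if_neg hjm]
              apply Finset.sum_eq_zero
              intro i hi
              have hi' := Nat.lt_succ_iff.mp (Finset.mem_range.mp hi)
              exact hzdiag i hi' j hj (by omega)
          rcases le_or_gt i m with him | him <;> rcases le_or_gt i n with hin | hin
          · rw [hμ i him, hν i hin, if_pos hin, if_pos him]
          · rw [hμ i him, if_neg (by omega), (hπ n).2.1 i hin]
          · rw [hν i hin, if_neg (by omega), (hπ m).2.1 i him]
          · rw [(hπ m).2.1 i him, (hπ n).2.1 i hin]
    exact fun m n => key (m+n) m n le_rfl
  exact ⟨hsymm, htri, hpos⟩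
end

section
/- For every m ≤ n, the optimal transport problem defining d_{m,n} admits an optimal transport plan z that is simple, i.e. z_{i,i} = min(π_i^m, π_i^n) for all i = 0,…,m. -/
lemma diag_le {μ ν : ℕ → ℝ} {m n : ℕ} {z : ℕ → ℕ → ℝ}
    (hz : IsPlan μ ν m n z) (hmn : m ≤ n) {k : ℕ} (hk : k ≤ m) :
    z k k ≤ min (μ k) (ν k) := by
  obtain ⟨h0, _, hrow, hcol⟩ := hz
  refine le_min ?_ ?_
  · rw [← hrow k hk]
    exact Finset.single_le_sum (fun j _ => h0 k j)
      (Finset.mem_range.2 (Nat.lt_succ_of_le (hk.trans hmn)))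
  · rw [← hcol k (hk.trans hmn)]
    exact Finset.single_le_sum (fun j _ => h0 j k) (Finset.mem_range.2 (Nat.lt_succ_of_le hk))

lemma D_nonneg {π D : ℕ → ℕ → ℝ} (hD : IsRecursiveOT π D) : ∀ i j, 0 ≤ D i j := by
  obtain ⟨h00, h0j, hi0, hls⟩ := hD
  intro i
  induction i using Nat.strong_induction_on with
  | _ i ih =>
    intro j
    match i, j with
    | 0, 0 => rw [h00]
    | 0, j + 1 => rw [h0j]; norm_num
    | i + 1, 0 => rw [hi0]; norm_num
    | i + 1, j + 1 =>
      obtain ⟨z, hz, hc⟩ := (hls i j).1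
      rw [hc]
      exact Finset.sum_nonneg fun a ha => Finset.sum_nonneg fun b _ =>
        mul_nonneg (hz.1 a b) (ih a (Finset.mem_range.1 ha) b)

lemma D_diag {π D : ℕ → ℕ → ℝ} (hπ : ∀ n, IsProbOn (π n) n)
    (hD : IsRecursiveOT π D) : ∀ i, D i i = 0 := by
  intro i
  induction i using Nat.strong_induction_on with
  | _ i ih =>
    match i with
    | 0 => exact hD.1
    | i + 1 =>
      refine le_antisymm ?_ (D_nonneg hD _ _)
      have hplan : IsPlan (π i) (π i) i i (fun a b => if a = b then π i a else 0) := by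
        obtain ⟨hnn, hsupp, hsum⟩ := hπ i
        refine ⟨fun a b => ?_, fun a b hab => ?_, fun a ha => ?_, fun b _ => ?_⟩
        · dsimp only; split <;> [exact hnn a; rfl]
        · dsimp only; split
          · rename_i h; subst h; rcases hab with h | h <;> exact hsupp a h
          · rfl
        · simp [Nat.lt_succ_iff, ha]
        · rw [Finset.sum_ite_eq' (Finset.range (i+1)) b (π i)]
          simp_all [Nat.lt_succ_iff]
      have := (hD.2.2.2 i i).2 ⟨_, hplan, rfl⟩
      calc D (i+1) (i+1) ≤ cost D i i _ := this
        _ = 0 := by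
          unfold cost
          refine Finset.sum_eq_zero fun a ha => Finset.sum_eq_zero fun b hb => ?_
          dsimp only; split
          · rename_i h; subst h; rw [ih a (Finset.mem_range.1 ha), mul_zero]
          · rw [zero_mul]

lemma cost_decomp (D : ℕ → ℕ → ℝ) (m n : ℕ) (w : ℕ → ℕ → ℝ) {i : ℕ}
    (hi : i ≤ m) (hmn : m ≤ n) :
    cost D m n w = w i i * D i i
      + ∑ j ∈ (Finset.range (n+1)).erase i, w i j * D i j
      + (∑ k ∈ (Finset.range (m+1)).erase i, w k i * D k i
      + ∑ k ∈ (Finset.range (m+1)).erase i, ∑ j ∈ (Finset.range (n+1)).erase i, w k j * D k j) := by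
  have him : i ∈ Finset.range (m+1) := Finset.mem_range.2 (Nat.lt_succ_of_le hi)
  have hin : i ∈ Finset.range (n+1) := Finset.mem_range.2 (Nat.lt_succ_of_le (hi.trans hmn))
  unfold cost
  rw [← Finset.add_sum_erase _ _ him, ← Finset.add_sum_erase _ _ hin]
  congr 1
  rw [← Finset.sum_add_distrib]
  exact Finset.sum_congr rfl fun k _ => (Finset.add_sum_erase _ _ hin).symm

lemma fix_step (D : ℕ → ℕ → ℝ) (hDnn : ∀ a b, 0 ≤ D a b)
    (htri : ∀ a b c, D a b ≤ D a c + D c b)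
    (μ ν : ℕ → ℝ) (m n : ℕ) (hmn : m ≤ n)
    (z : ℕ → ℕ → ℝ) (hz : IsPlan μ ν m n z)
    (i : ℕ) (hi : i ≤ m) (hDii : D i i = 0) :
    ∃ z', IsPlan μ ν m n z' ∧ cost D m n z' ≤ cost D m n z ∧
      z' i i = min (μ i) (ν i) ∧
      ∀ k, k ≤ m → z k k = min (μ k) (ν k) → z' k k = min (μ k) (ν k) := by
  obtain ⟨hz0, hzsupp, hrow, hcol⟩ := hz
  set s := min (μ i) (ν i) with hs
  have hzis : z i i ≤ s := diag_le ⟨hz0, hzsupp, hrow, hcol⟩ hmn hi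
  rcases eq_or_lt_of_le hzis with heq | hlt
  · exact ⟨z, ⟨hz0, hzsupp, hrow, hcol⟩, le_refl _, heq, fun k _ h => h⟩
  set δ := s - z i i with hδ
  set r := μ i - z i i with hr
  set c := ν i - z i i with hc
  have hδ0 : 0 < δ := by simp [hδ, hlt]
  have hδr : δ ≤ r := by
    have : s ≤ μ i := min_le_left _ _
    simp only [hδ, hr]; linarith
  have hδc : δ ≤ c := by
    have : s ≤ ν i := min_le_right _ _
    simp only [hδ, hc]; linarith
  have hr0 : 0 < r := lt_of_lt_of_le hδ0 hδr
  have hc0 : 0 < c := lt_of_lt_of_le hδ0 hδc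
  have har : δ / r ≤ 1 := (div_le_one hr0).2 hδr
  have hac : δ / c ≤ 1 := (div_le_one hc0).2 hδc
  have ht0 : 0 ≤ δ / (r * c) := by positivity
  set z' : ℕ → ℕ → ℝ := fun k j =>
    if k = i then (if j = i then s else z i j * (1 - δ / r))
    else if j = i then z k i * (1 - δ / c)
    else z k j + z i j * (z k i * (δ / (r * c))) with hz'
  have him : i ∈ Finset.range (m+1) := Finset.mem_range.2 (Nat.lt_succ_of_le hi)
  have hin : i ∈ Finset.range (n+1) := Finset.mem_range.2 (Nat.lt_succ_of_le (hi.trans hmn))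
  have hRi : ∑ j ∈ (Finset.range (n+1)).erase i, z i j = r := by
    have := Finset.add_sum_erase _ (fun j => z i j) hin
    rw [hrow i hi] at this; simp only [hr]; linarith
  have hCi : ∑ k ∈ (Finset.range (m+1)).erase i, z k i = c := by
    have := Finset.add_sum_erase _ (fun k => z k i) him
    rw [hcol i (hi.trans hmn)] at this; simp only [hc]; linarith
  have hrne : r ≠ 0 := hr0.ne'
  have hcne : c ≠ 0 := hc0.ne'
  have hz'ii : z' i i = s := by simp [hz']
  have hz'row : ∀ j, j ≠ i → z' i j = z i j * (1 - δ / r) := by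
    intro j hj; simp [hz', hj]
  have hz'col : ∀ k, k ≠ i → z' k i = z k i * (1 - δ / c) := by
    intro k hk; simp [hz', hk]
  have hz'off : ∀ k j, k ≠ i → j ≠ i →
      z' k j = z k j + z i j * (z k i * (δ / (r * c))) := by
    intro k j hk hj; simp [hz', hk, hj]
  have hrowz : ∀ k, k ≤ m → ∑ j ∈ (Finset.range (n+1)).erase i, z k j = μ k - z k i := by
    intro k hk
    have := Finset.add_sum_erase _ (fun j => z k j) hin
    rw [hrow k hk] at this; linarith
  have hcolz : ∀ j, j ≤ n → ∑ k ∈ (Finset.range (m+1)).erase i, z k j = ν j - z i j := by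
    intro j hj
    have := Finset.add_sum_erase _ (fun k => z k j) him
    rw [hcol j hj] at this; linarith
  have hplan : IsPlan μ ν m n z' := by
    refine ⟨?_, ?_, ?_, ?_⟩
    · intro k j
      simp only [hz']
      split
      · split
        · linarith [hz0 i i]
        · exact mul_nonneg (hz0 i j) (by linarith)
      · split
        · exact mul_nonneg (hz0 k i) (by linarith)
        · exact add_nonneg (hz0 k j) (mul_nonneg (hz0 i j) (mul_nonneg (hz0 k i) ht0))
    · intro k j hkj
      simp only [hz']
      split
      · rename_i hki
        rcases hkj with h | h
        · exact absurd hi (by omega)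
        · rw [if_neg (by omega), hzsupp i j (Or.inr h), zero_mul]
      · split
        · rename_i h1 h2
          rcases hkj with h | h
          · rw [hzsupp k i (by omega), zero_mul]
          · exact absurd (hi.trans hmn) (by omega)
        · rcases hkj with h | h
          · rw [hzsupp k j (Or.inl h), hzsupp k i (Or.inl h)]; ring
          · rw [hzsupp k j (Or.inr h), hzsupp i j (Or.inr h)]; ring
    · intro k hk
      by_cases hki : k = i
      · rw [hki, ← Finset.add_sum_erase _ _ hin, hz'ii,
          Finset.sum_congr rfl (fun j hj => hz'row j (Finset.ne_of_mem_erase hj)),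
          ← Finset.sum_mul, hRi]
        field_simp
        linarith
      · rw [← Finset.add_sum_erase _ _ hin, hz'col k hki,
          Finset.sum_congr rfl (fun j hj => hz'off k j hki (Finset.ne_of_mem_erase hj)),
          Finset.sum_add_distrib, ← Finset.sum_mul, hRi, hrowz k hk]
        field_simp
        ring
    · intro j hj
      by_cases hji : j = i
      · rw [hji, ← Finset.add_sum_erase _ _ him, hz'ii,
          Finset.sum_congr rfl (fun k hk => hz'col k (Finset.ne_of_mem_erase hk)),
          ← Finset.sum_mul, hCi]
        field_simp
        linarith
      · rw [← Finset.add_sum_erase _ _ him, hz'row j hji,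
          Finset.sum_congr rfl (fun k hk => hz'off k j (Finset.ne_of_mem_erase hk) hji),
          Finset.sum_add_distrib, hcolz j hj]
        have : ∑ k ∈ (Finset.range (m+1)).erase i, z i j * (z k i * (δ / (r * c)))
            = z i j * (δ / r) := by
          rw [← Finset.mul_sum]
          rw [show ∑ k ∈ (Finset.range (m+1)).erase i, z k i * (δ / (r * c))
            = (∑ k ∈ (Finset.range (m+1)).erase i, z k i) * (δ / (r * c)) from
              (Finset.sum_mul _ _ _).symm, hCi]
          field_simp
        rw [this]
        ring
  have hcost : cost D m n z' ≤ cost D m n z := by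
    have e1 : ∑ j ∈ (Finset.range (n+1)).erase i, z' i j * D i j
        = (1 - δ / r) * ∑ j ∈ (Finset.range (n+1)).erase i, z i j * D i j := by
      rw [Finset.mul_sum]
      exact Finset.sum_congr rfl fun j hj => by
        rw [hz'row j (Finset.ne_of_mem_erase hj)]; ring
    have e2 : ∑ k ∈ (Finset.range (m+1)).erase i, z' k i * D k i
        = (1 - δ / c) * ∑ k ∈ (Finset.range (m+1)).erase i, z k i * D k i := by
      rw [Finset.mul_sum]
      exact Finset.sum_congr rfl fun k hk => by
        rw [hz'col k (Finset.ne_of_mem_erase hk)]; ring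
    have e3 : ∑ k ∈ (Finset.range (m+1)).erase i, ∑ j ∈ (Finset.range (n+1)).erase i,
          z' k j * D k j
        = (∑ k ∈ (Finset.range (m+1)).erase i, ∑ j ∈ (Finset.range (n+1)).erase i,
            z k j * D k j)
          + (δ / (r * c)) * ∑ k ∈ (Finset.range (m+1)).erase i,
              ∑ j ∈ (Finset.range (n+1)).erase i, z i j * z k i * D k j := by
      rw [Finset.mul_sum, ← Finset.sum_add_distrib]
      refine Finset.sum_congr rfl fun k hk => ?_
      rw [Finset.mul_sum, ← Finset.sum_add_distrib]
      refine Finset.sum_congr rfl fun j hj => ?_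
      rw [hz'off k j (Finset.ne_of_mem_erase hk) (Finset.ne_of_mem_erase hj)]
      ring
    have hS : ∑ k ∈ (Finset.range (m+1)).erase i, ∑ j ∈ (Finset.range (n+1)).erase i,
          z i j * z k i * D k j
        ≤ r * (∑ k ∈ (Finset.range (m+1)).erase i, z k i * D k i)
          + c * ∑ j ∈ (Finset.range (n+1)).erase i, z i j * D i j := by
      calc ∑ k ∈ (Finset.range (m+1)).erase i, ∑ j ∈ (Finset.range (n+1)).erase i,
            z i j * z k i * D k j
          ≤ ∑ k ∈ (Finset.range (m+1)).erase i, ∑ j ∈ (Finset.range (n+1)).erase i,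
            z i j * z k i * (D k i + D i j) := by
            refine Finset.sum_le_sum fun k _ => Finset.sum_le_sum fun j _ => ?_
            exact mul_le_mul_of_nonneg_left (htri k j i)
              (mul_nonneg (hz0 i j) (hz0 k i))
        _ = ∑ k ∈ (Finset.range (m+1)).erase i,
              ((∑ j ∈ (Finset.range (n+1)).erase i, z i j) * (z k i * D k i)
                + z k i * ∑ j ∈ (Finset.range (n+1)).erase i, z i j * D i j) := by
            refine Finset.sum_congr rfl fun k _ => ?_
            rw [Finset.sum_mul, Finset.mul_sum, ← Finset.sum_add_distrib]
            exact Finset.sum_congr rfl fun j _ => by ring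
        _ = r * (∑ k ∈ (Finset.range (m+1)).erase i, z k i * D k i)
              + c * ∑ j ∈ (Finset.range (n+1)).erase i, z i j * D i j := by
            rw [hRi, Finset.sum_add_distrib, ← Finset.mul_sum, ← Finset.sum_mul, hCi]
    rw [cost_decomp D m n z' hi hmn, cost_decomp D m n z hi hmn, hz'ii, hDii,
      mul_zero, mul_zero, e1, e2, e3]
    have key : (δ / (r * c)) * (∑ k ∈ (Finset.range (m+1)).erase i,
          ∑ j ∈ (Finset.range (n+1)).erase i, z i j * z k i * D k j)
        ≤ (δ / c) * (∑ k ∈ (Finset.range (m+1)).erase i, z k i * D k i)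
          + (δ / r) * ∑ j ∈ (Finset.range (n+1)).erase i, z i j * D i j := by
      calc (δ / (r * c)) * (∑ k ∈ (Finset.range (m+1)).erase i,
            ∑ j ∈ (Finset.range (n+1)).erase i, z i j * z k i * D k j)
          ≤ (δ / (r * c)) * (r * (∑ k ∈ (Finset.range (m+1)).erase i, z k i * D k i)
              + c * ∑ j ∈ (Finset.range (n+1)).erase i, z i j * D i j) :=
            mul_le_mul_of_nonneg_left hS ht0
        _ = (δ / c) * (∑ k ∈ (Finset.range (m+1)).erase i, z k i * D k i)
              + (δ / r) * ∑ j ∈ (Finset.range (n+1)).erase i, z i j * D i j := by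
            field_simp
    nlinarith [key]
  have hpres : ∀ k, k ≤ m → z k k = min (μ k) (ν k) → z' k k = min (μ k) (ν k) := by
    intro k hk hkk
    by_cases hki : k = i
    · rw [hki]; exact hz'ii
    · have h1 : z k k ≤ z' k k := by
        rw [hz'off k k hki hki]
        have := mul_nonneg (hz0 i k) (mul_nonneg (hz0 k i) ht0)
        linarith
      have h2 := diag_le hplan hmn hk
      rw [hkk] at h1
      exact le_antisymm h2 h1
  exact ⟨z', hplan, hcost, hz'ii, hpres⟩

lemma fix_all (D : ℕ → ℕ → ℝ) (hDnn : ∀ a b, 0 ≤ D a b) (hDdiag : ∀ a, D a a = 0)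
    (htri : ∀ a b c, D a b ≤ D a c + D c b)
    (μ ν : ℕ → ℝ) (m n : ℕ) (hmn : m ≤ n)
    (z : ℕ → ℕ → ℝ) (hz : IsPlan μ ν m n z) :
    ∀ t, ∃ z', IsPlan μ ν m n z' ∧ cost D m n z' ≤ cost D m n z ∧
      ∀ k, k < t → k ≤ m → z' k k = min (μ k) (ν k) := by
  intro t
  induction t with
  | zero => exact ⟨z, hz, le_refl _, fun k hk _ => absurd hk (Nat.not_lt_zero k)⟩
  | succ t ih =>
    obtain ⟨w, hw, hcw, hdiag⟩ := ih
    by_cases ht : t ≤ m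
    · obtain ⟨w', hw', hcw', hii, hpres⟩ :=
        fix_step D hDnn htri μ ν m n hmn w hw t ht (hDdiag t)
      refine ⟨w', hw', hcw'.trans hcw, fun k hk hkm => ?_⟩
      rcases Nat.lt_succ_iff_lt_or_eq.1 hk with h | h
      · exact hpres k hkm (hdiag k h hkm)
      · rw [h]; exact hii
    · exact ⟨w, hw, hcw, fun k hk hkm => hdiag k (by omega) hkm⟩


/-- for `m ≤ n`, the problem defining `d_{m,n}` admits a *simple*
optimal transport plan, i.e. one with `z i i = min (π_i^m) (π_i^n)` for all `i ≤ m`. -/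
theorem exists_simple_optimal_plan (π D : ℕ → ℕ → ℝ)
    (hπ : ∀ n, IsProbOn (π n) n)
    (hD : IsRecursiveOT π D)
    (htri : ∀ a b c : ℕ, D a b ≤ D a c + D c b) :
    ∀ m n : ℕ, m ≤ n →
      ∃ z : ℕ → ℕ → ℝ, IsPlan (π m) (π n) m n z ∧
        cost D m n z = D (m + 1) (n + 1) ∧
        ∀ i, i ≤ m → z i i = min (π m i) (π n i) := by
  intro m n hmn
  obtain ⟨z0, hz0, hc0⟩ := (hD.2.2.2 m n).1
  obtain ⟨z', hz', hcle, hdiag⟩ :=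
    fix_all D (D_nonneg hD) (D_diag hπ hD) htri (π m) (π n) m n hmn z0 hz0 (m + 1)
  refine ⟨z', hz', le_antisymm (hc0 ▸ hcle) ((hD.2.2.2 m n).2 ⟨z', hz', rfl⟩),
    fun i hi => hdiag i (Nat.lt_succ_of_le hi) hi⟩
end

section
/- Let T : C → C be a nonexpansive map on a bounded convex subset C of a normed space with diam(C) ≤ 1, let x^0, y^0 ∈ C with the convention Tx^{-1} = y^0, and let x^n = Σ_{i=0}^n π_i^n T x^{i-1} be the general Krasnosel'skii–Mann iteration. Then ‖x^m − x^n‖ ≤ d_{m,n} for all m, n ∈ ℕ. -/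
/-- for the general Krasnosel'skii–Mann iteration
`x^n = Σ_{i=0}^n π_i^n T x^{i-1}` (with `T x^{-1} = y^0`) of a nonexpansive map `T` on a
convex set `C` of diameter at most 1, one has `‖x^m − x^n‖ ≤ d_{m,n}` for all `m, n ∈ ℕ`. -/
theorem km_distance_bound {E : Type*} [NormedAddCommGroup E] [NormedSpace ℝ E]
    (C : Set E) (hC : Convex ℝ C)
    (hdiam : ∀ a ∈ C, ∀ b ∈ C, ‖a - b‖ ≤ 1)
    (T : E → E) (hTC : Set.MapsTo T C C)
    (hne : ∀ a ∈ C, ∀ b ∈ C, ‖T a - T b‖ ≤ ‖a - b‖)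
    (π D : ℕ → ℕ → ℝ)
    (hπ : ∀ n, IsProbOn (π n) n)
    (hD : IsRecursiveOT π D)
    (y0 : E) (hy0C : y0 ∈ C)
    (x y : ℕ → E)
    (hy0 : y 0 = y0)
    (hy : ∀ k, y (k + 1) = T (x k))
    (hx : ∀ n, x n = ∑ i ∈ Finset.range (n + 1), π n i • y i) :
    ∀ m n : ℕ, ‖x m - x n‖ ≤ D (m + 1) (n + 1) := by
  obtain ⟨hD00, hD0r, hD0c, hDopt⟩ := hD
  have hxC : ∀ n, x n ∈ C := by
    intro n
    induction n using Nat.strong_induction_on with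
    | _ n ih =>
      have hyC : ∀ i, i ≤ n → y i ∈ C := by
        intro i hi
        match i with
        | 0 => rw [hy0]; exact hy0C
        | k + 1 => rw [hy k]; exact hTC (ih k (by omega))
      rw [hx n]
      exact hC.sum_mem (fun i _ => (hπ n).1 i) (hπ n).2.2
        (fun i hi => hyC i (Finset.mem_range_succ_iff.mp hi))
  have hyC : ∀ i, y i ∈ C := by
    intro i
    match i with
    | 0 => rw [hy0]; exact hy0C
    | k + 1 => rw [hy k]; exact hTC (hxC k)
  have main : ∀ N, ∀ m n, m + n ≤ N → ‖x m - x n‖ ≤ D (m + 1) (n + 1) := by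
    intro N
    induction N using Nat.strong_induction_on with
    | _ N ih =>
      intro m n hmn
      obtain ⟨⟨z, ⟨hz0, hzsupp, hrow, hcol⟩, hcost⟩, -⟩ := hDopt m n
      have hyd : ∀ i ≤ m, ∀ j ≤ n, ‖y i - y j‖ ≤ D i j := by
        intro i hi j hj
        match i, j with
        | 0, 0 => simp [hD00]
        | 0, l + 1 => rw [hD0r]; exact hdiam _ (hyC 0) _ (hyC (l + 1))
        | k + 1, 0 => rw [hD0c]; exact hdiam _ (hyC (k + 1)) _ (hyC 0)
        | k + 1, l + 1 =>
          rw [hy k, hy l]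
          exact le_trans (hne _ (hxC k) _ (hxC l))
            (ih (N - 1) (by omega) k l (by omega))
      have h1 : x m = ∑ i ∈ Finset.range (m + 1), ∑ j ∈ Finset.range (n + 1),
          z i j • y i := by
        rw [hx m]
        refine Finset.sum_congr rfl fun i hi => ?_
        rw [← Finset.sum_smul, hrow i (Finset.mem_range_succ_iff.mp hi)]
      have h2 : x n = ∑ i ∈ Finset.range (m + 1), ∑ j ∈ Finset.range (n + 1),
          z i j • y j := by
        rw [hx n, Finset.sum_comm]
        refine Finset.sum_congr rfl fun j hj => ?_
        rw [← Finset.sum_smul, hcol j (Finset.mem_range_succ_iff.mp hj)]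
      have key : x m - x n = ∑ i ∈ Finset.range (m + 1), ∑ j ∈ Finset.range (n + 1),
          z i j • (y i - y j) := by
        rw [h1, h2, ← Finset.sum_sub_distrib]
        refine Finset.sum_congr rfl fun i _ => ?_
        rw [← Finset.sum_sub_distrib]
        exact Finset.sum_congr rfl fun j _ => (smul_sub _ _ _).symm
      rw [key, hcost]
      calc ‖∑ i ∈ Finset.range (m + 1), ∑ j ∈ Finset.range (n + 1),
              z i j • (y i - y j)‖
          ≤ ∑ i ∈ Finset.range (m + 1), ∑ j ∈ Finset.range (n + 1),
              ‖z i j • (y i - y j)‖ := by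
            refine le_trans (norm_sum_le _ _) (Finset.sum_le_sum fun i _ => ?_)
            exact norm_sum_le _ _
        _ ≤ cost D m n z := by
            refine Finset.sum_le_sum fun i hi => Finset.sum_le_sum fun j hj => ?_
            rw [norm_smul, Real.norm_eq_abs, abs_of_nonneg (hz0 i j)]
            exact mul_le_mul_of_nonneg_left
              (hyd i (Finset.mem_range_succ_iff.mp hi) j
                (Finset.mem_range_succ_iff.mp hj)) (hz0 i j)
  exact fun m n => main (m + n) m n le_rfl
end

section
/- Under the same hypotheses as the Krasnosel'skii–Mann distance bound, the fixed point residual satisfies ‖x^n − T x^n‖ ≤ R_n := Σ_{i=0}^n π_i^n d_{i-1,n}. -/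
/-- the fixed point residual of the Krasnosel'skii–Mann iteration satisfies
`‖x^n − T x^n‖ ≤ R_n = Σ_{i=0}^n π_i^n d_{i-1,n}`. -/
theorem km_residual_bound {E : Type*} [NormedAddCommGroup E] [NormedSpace ℝ E]
    (C : Set E) (hC : Convex ℝ C)
    (hdiam : ∀ a ∈ C, ∀ b ∈ C, ‖a - b‖ ≤ 1)
    (T : E → E) (hTC : Set.MapsTo T C C)
    (hne : ∀ a ∈ C, ∀ b ∈ C, ‖T a - T b‖ ≤ ‖a - b‖)
    (π D : ℕ → ℕ → ℝ)
    (hπ : ∀ n, IsProbOn (π n) n)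
    (hD : IsRecursiveOT π D)
    (y0 : E) (hy0C : y0 ∈ C)
    (x y : ℕ → E)
    (hy0 : y 0 = y0)
    (hy : ∀ k, y (k + 1) = T (x k))
    (hx : ∀ n, x n = ∑ i ∈ Finset.range (n + 1), π n i • y i)
    (hbound : ∀ m n : ℕ, ‖x m - x n‖ ≤ D (m + 1) (n + 1)) :
    ∀ n : ℕ, ‖x n - T (x n)‖ ≤ ∑ i ∈ Finset.range (n + 1), π n i * D i (n + 1) := by
  have hmem : ∀ n, y n ∈ C ∧ x n ∈ C := by
    intro n
    induction n using Nat.strong_induction_on with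
    | _ n ih =>
      have hyC : y n ∈ C := by
        cases n with
        | zero => rw [hy0]; exact hy0C
        | succ k => rw [hy]; exact hTC (ih k (Nat.lt_succ_self k)).2
      refine ⟨hyC, ?_⟩
      rw [hx]
      apply hC.sum_mem (fun i _ => (hπ n).1 i) (hπ n).2.2
      intro i hi
      rcases Nat.lt_succ_iff_lt_or_eq.mp (Finset.mem_range.mp hi) with h | h
      · exact (ih i h).1
      · subst h; exact hyC
  intro n
  have hsum1 := (hπ n).2.2
  set v := T (x n) with hv
  have key : x n - v = ∑ i ∈ Finset.range (n + 1), π n i • (y i - v) := by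
    rw [hx n]
    simp [smul_sub, Finset.sum_sub_distrib, ← Finset.sum_smul, hsum1]
  rw [key]
  refine le_trans (norm_sum_le _ _) (Finset.sum_le_sum fun i _ => ?_)
  rw [norm_smul, Real.norm_of_nonneg ((hπ n).1 i)]
  refine mul_le_mul_of_nonneg_left ?_ ((hπ n).1 i)
  cases i with
  | zero =>
    rw [hD.2.1 n, hy0]
    exact hdiam y0 hy0C _ (hTC (hmem n).2)
  | succ k =>
    rw [hy, hv]
    exact le_trans (hne _ (hmem k).2 _ (hmem n).2) (hbound k n)
end

section
/- If u = (u_0,…,u_n) satisfies u_j ≤ u_i + d_{i-1,j-1} for all 0 ≤ i, j ≤ n, and u is extended to all of ℕ by u_i = min_{0 ≤ k ≤ n} (u_k + d_{k-1,i-1}) for i > n, then the extension satisfies |u_i − u_j| ≤ d_{i-1,j-1} for all i, j ∈ ℕ. -/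
/-- McShane–Whitney-type extension. If `u` satisfies
`u j ≤ u i + d_{i-1,j-1}` for `0 ≤ i, j ≤ n` and is extended by
`u i = min_{0 ≤ k ≤ n} (u k + d_{k-1,i-1})` for `i > n`, then
`|u i − u j| ≤ d_{i-1,j-1}` for all `i, j ∈ ℕ`. Here `D i j = d_{i-1,j-1}` is any
metric on `ℕ ∪ {-1}` with values in `[0,1]` such that `d_{-1,k} = 1` for `k ∈ ℕ`. -/
theorem lipschitz_extension (D : ℕ → ℕ → ℝ)
    (hsym : ∀ a b, D a b = D b a)
    (htri : ∀ a b c, D a b ≤ D a c + D c b)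
    (hzero : ∀ a, D a a = 0)
    (hnonneg : ∀ a b, 0 ≤ D a b)
    (hle1 : ∀ a b, D a b ≤ 1)
    (hbase : ∀ k, D 0 (k + 1) = 1)
    (n : ℕ) (u : ℕ → ℝ)
    (hfeas : ∀ i, i ≤ n → ∀ j, j ≤ n → u j ≤ u i + D i j)
    (hext : ∀ i, n < i → IsLeast {v : ℝ | ∃ k, k ≤ n ∧ v = u k + D k i} (u i)) :
    ∀ i j : ℕ, |u i - u j| ≤ D i j := by
  have key : ∀ i j : ℕ, u j ≤ u i + D i j := by
    intro i j
    by_cases hj : j ≤ n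
    · by_cases hi : i ≤ n
      · exact hfeas i hi j hj
      · obtain ⟨⟨k, hk, hki⟩, -⟩ := hext i (not_le.mp hi)
        calc u j ≤ u k + D k j := hfeas k hk j hj
        _ ≤ u k + (D k i + D i j) := by linarith [htri k j i]
        _ = u i + D i j := by rw [hki]; ring
    · obtain ⟨-, hlbj⟩ := hext j (not_le.mp hj)
      by_cases hi : i ≤ n
      · exact hlbj ⟨i, hi, rfl⟩
      · obtain ⟨⟨k, hk, hki⟩, -⟩ := hext i (not_le.mp hi)
        calc u j ≤ u k + D k j := hlbj ⟨k, hk, rfl⟩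
        _ ≤ u k + (D k i + D i j) := by linarith [htri k j i]
        _ = u i + D i j := by rw [hki]; ring
  intro i j
  rw [abs_sub_le_iff]
  constructor
  · linarith [key j i, hsym j i]
  · linarith [key i j]
end

section
/- If the quadrangle inequality d_{i-1,l-1} + d_{j-1,k-1} ≤ d_{i-1,k-1} + d_{j-1,l-1} holds for all i ≤ j ≤ k ≤ l up to level n−1, then the transport problem for d_{m,n} (m ≤ n) admits an optimal transport plan that is both simple and nested, i.e. z_{i,i} = min(π_i^m, π_i^n) for all i, and there are no indices i < j < k < l with z_{i,k} > 0 and z_{j,l} > 0. -/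
/-!
By induction on the indices, `D` vanishes on the diagonal, is bounded by `2` and satisfies the
triangle inequality (glue an optimal plan for `d_{a,c}` to one for `d_{c,b}`). The optimal plans
form a nonempty compact set, so one of them, `z`, minimises the secondary linear cost
`C(i,j) = ij - (2n² + 1)[i = j]`. Moving mass around a `2 × 2` minor of `z` keeps it optimal as
long as the `D`-cost does not increase, so such a move cannot decrease the `C`-cost. Uncrossing
`(i,k), (j,l)` into `(i,l), (j,k)` is allowed by the quadrangle inequality, and pulling mass from
`(i,c), (r,i)` onto `(i,i), (r,c)` by the triangle inequality; both strictly decrease `C`. Hence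
`z` is nested and simple.
-/

open Finset

namespace IsPlan

variable {μ ν : ℕ → ℝ} {m n : ℕ} {z : ℕ → ℕ → ℝ}

theorem le_left (hz : IsPlan μ ν m n z) {i j : ℕ} (hi : i ≤ m) (hj : j ≤ n) : z i j ≤ μ i := by
  rw [← hz.2.2.1 i hi]
  exact single_le_sum (fun k _ => hz.1 i k) (mem_range_succ_iff.2 hj)

theorem le_right (hz : IsPlan μ ν m n z) {i j : ℕ} (hi : i ≤ m) (hj : j ≤ n) : z i j ≤ ν j := by
  rw [← hz.2.2.2 j hj]
  exact single_le_sum (fun k _ => hz.1 k j) (mem_range_succ_iff.2 hi)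

theorem le_of_ne_zero (hz : IsPlan μ ν m n z) {i j : ℕ} (h : z i j ≠ 0) : i ≤ m ∧ j ≤ n := by
  by_contra! H
  exact h (hz.2.1 i j (by omega))

theorem eq_zero_of_left_eq_zero (hz : IsPlan μ ν m n z) {i : ℕ} (h : μ i = 0) (j : ℕ) :
    z i j = 0 := by
  by_contra hij
  obtain ⟨hi, hj⟩ := hz.le_of_ne_zero hij
  exact hij (le_antisymm (h ▸ hz.le_left hi hj) (hz.1 i j))

theorem eq_zero_of_right_eq_zero (hz : IsPlan μ ν m n z) {j : ℕ} (h : ν j = 0) (i : ℕ) :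
    z i j = 0 := by
  by_contra hij
  obtain ⟨hi, hj⟩ := hz.le_of_ne_zero hij
  exact hij (le_antisymm (h ▸ hz.le_right hi hj) (hz.1 i j))

theorem exists_pos_of_lt_left (hz : IsPlan μ ν m n z) {i j : ℕ} (hi : i ≤ m) (hj : j ≤ n)
    (h : z i j < μ i) : ∃ k ≤ n, k ≠ j ∧ 0 < z i k := by
  by_contra! H
  have : ∑ k ∈ range (n + 1), z i k = z i j :=
    sum_eq_single_of_mem j (mem_range_succ_iff.2 hj) fun k hk hkj =>
      le_antisymm (H k (mem_range_succ_iff.1 hk) hkj) (hz.1 i k)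
  linarith [hz.2.2.1 i hi]

theorem exists_pos_of_lt_right (hz : IsPlan μ ν m n z) {i j : ℕ} (hi : i ≤ m) (hj : j ≤ n)
    (h : z i j < ν j) : ∃ k ≤ m, k ≠ i ∧ 0 < z k j := by
  by_contra! H
  have : ∑ k ∈ range (m + 1), z k j = z i j :=
    sum_eq_single_of_mem i (mem_range_succ_iff.2 hi) fun k hk hki =>
      le_antisymm (H k (mem_range_succ_iff.1 hk) hki) (hz.1 k j)
  linarith [hz.2.2.2 j hj]

theorem cost_nonneg (hz : IsPlan μ ν m n z) {D : ℕ → ℕ → ℝ}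
    (hD : ∀ i ≤ m, ∀ j ≤ n, 0 ≤ D i j) : 0 ≤ cost D m n z :=
  sum_nonneg fun i hi => sum_nonneg fun j hj =>
    mul_nonneg (hz.1 i j) (hD i (mem_range_succ_iff.1 hi) j (mem_range_succ_iff.1 hj))

theorem cost_le (hz : IsPlan μ ν m n z) {D : ℕ → ℕ → ℝ} {B : ℝ}
    (hD : ∀ i ≤ m, ∀ j ≤ n, D i j ≤ B) : cost D m n z ≤ B * ∑ i ∈ range (m + 1), μ i := by
  calc cost D m n z ≤ ∑ i ∈ range (m + 1), ∑ j ∈ range (n + 1), z i j * B :=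
        sum_le_sum fun i hi => sum_le_sum fun j hj => mul_le_mul_of_nonneg_left
          (hD i (mem_range_succ_iff.1 hi) j (mem_range_succ_iff.1 hj)) (hz.1 i j)
    _ = B * ∑ i ∈ range (m + 1), μ i := by
        rw [mul_sum]
        refine sum_congr rfl fun i hi => ?_
        rw [← sum_mul, hz.2.2.1 i (mem_range_succ_iff.1 hi), mul_comm]

theorem diagonal {μ : ℕ → ℝ} (h0 : ∀ i, 0 ≤ μ i) (hsupp : ∀ i, m < i → μ i = 0) :
    IsPlan μ μ m m fun i j => if i = j then μ i else 0 := by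
  refine ⟨fun i j => ?_, fun i j hij => ?_, fun i hi => ?_, fun j hj => ?_⟩ <;> dsimp only
  · split_ifs <;> simp [h0]
  · split_ifs with h
    · subst h; exact hsupp i (by omega)
    · rfl
  · simp [sum_ite_eq, mem_range_succ_iff.2 hi]
  · simp [sum_ite_eq', mem_range_succ_iff.2 hj]

end IsPlan

/-- `κ` is the common marginal of `x` and `y`. Where `κ k = 0` the `k`-th term is `0` by the
convention `t / 0 = 0`, as it should be since then `x i k = 0`. -/
noncomputable def glue_s13 (c : ℕ) (κ : ℕ → ℝ) (x y : ℕ → ℕ → ℝ) : ℕ → ℕ → ℝ :=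
  fun i j => ∑ k ∈ range (c + 1), x i k * y k j / κ k

section Glue

variable {μ κ ν : ℕ → ℝ} {a b c : ℕ} {x y : ℕ → ℕ → ℝ}

theorem IsPlan.right_nonneg (hx : IsPlan μ κ a c x) {k : ℕ} (hk : k ≤ c) : 0 ≤ κ k :=
  hx.2.2.2 k hk ▸ sum_nonneg fun p _ => hx.1 p k

theorem IsPlan.sum_glue_right (hx : IsPlan μ κ a c x) (hy : IsPlan κ ν c b y) (p : ℕ) {k : ℕ}
    (hk : k ≤ c) : ∑ q ∈ range (b + 1), x p k * y k q / κ k = x p k := by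
  rw [← sum_div, ← mul_sum, hy.2.2.1 k hk]
  by_cases h : κ k = 0
  · simp [hx.eq_zero_of_right_eq_zero h]
  · exact mul_div_cancel_right₀ _ h

theorem IsPlan.sum_glue_left (hx : IsPlan μ κ a c x) (hy : IsPlan κ ν c b y) (q : ℕ) {k : ℕ}
    (hk : k ≤ c) : ∑ p ∈ range (a + 1), x p k * y k q / κ k = y k q := by
  rw [← sum_div, ← sum_mul, hx.2.2.2 k hk]
  by_cases h : κ k = 0
  · simp [hy.eq_zero_of_left_eq_zero h]
  · exact mul_div_cancel_left₀ _ h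

theorem isPlan_glue (hx : IsPlan μ κ a c x) (hy : IsPlan κ ν c b y) :
    IsPlan μ ν a b (glue_s13 c κ x y) := by
  refine ⟨fun i j => sum_nonneg fun k hk => ?_, fun i j hij => sum_eq_zero fun k _ => ?_,
    fun i hi => ?_, fun j hj => ?_⟩
  · exact div_nonneg (mul_nonneg (hx.1 i k) (hy.1 k j))
      (hx.right_nonneg (mem_range_succ_iff.1 hk))
  · rcases hij with hi | hj
    · simp [hx.2.1 i k (Or.inl hi)]
    · simp [hy.2.1 k j (Or.inr hj)]
  · rw [← hx.2.2.1 i hi, ← sum_congr rfl fun k hk => hx.sum_glue_right hy i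
      (mem_range_succ_iff.1 hk)]
    exact sum_comm
  · rw [← hy.2.2.2 j hj, ← sum_congr rfl fun k hk => hx.sum_glue_left hy j
      (mem_range_succ_iff.1 hk)]
    exact sum_comm

theorem IsPlan.cost_glue_le (hx : IsPlan μ κ a c x) (hy : IsPlan κ ν c b y) {D : ℕ → ℕ → ℝ}
    (hD : ∀ p ≤ a, ∀ q ≤ b, ∀ k ≤ c, D p q ≤ D p k + D k q) :
    cost D a b (glue_s13 c κ x y) ≤ cost D a c x + cost D c b y := by
  calc cost D a b (glue_s13 c κ x y)
      ≤ ∑ p ∈ range (a + 1), ∑ q ∈ range (b + 1), ∑ k ∈ range (c + 1),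
          x p k * y k q / κ k * (D p k + D k q) := by
        refine sum_le_sum fun p hp => sum_le_sum fun q hq => ?_
        rw [glue_s13, sum_mul]
        refine sum_le_sum fun k hk => mul_le_mul_of_nonneg_left
          (hD p (mem_range_succ_iff.1 hp) q (mem_range_succ_iff.1 hq) k (mem_range_succ_iff.1 hk))
          (div_nonneg (mul_nonneg (hx.1 p k) (hy.1 k q)) (hx.right_nonneg (mem_range_succ_iff.1 hk)))
    _ = cost D a c x + cost D c b y := by
        simp only [mul_add, sum_add_distrib]
        congr 1
        · refine sum_congr rfl fun p _ => ?_
          rw [sum_comm]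
          refine sum_congr rfl fun k hk => ?_
          rw [← sum_mul, hx.sum_glue_right hy p (mem_range_succ_iff.1 hk)]
        · rw [sum_comm, cost, sum_comm (s := range (c + 1))]
          refine sum_congr rfl fun q _ => ?_
          rw [sum_comm]
          refine sum_congr rfl fun k hk => ?_
          rw [← sum_mul, hx.sum_glue_left hy q (mem_range_succ_iff.1 hk)]

end Glue

namespace IsRecursiveOT

variable {π D : ℕ → ℕ → ℝ}

theorem exists_plan (hD : IsRecursiveOT π D) (m n : ℕ) :
    ∃ z, IsPlan (π m) (π n) m n z ∧ cost D m n z = D (m + 1) (n + 1) := by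
  obtain ⟨z, hz, hc⟩ := (hD.2.2.2 m n).1
  exact ⟨z, hz, hc.symm⟩

theorem le_cost (hD : IsRecursiveOT π D) {m n : ℕ} {z : ℕ → ℕ → ℝ}
    (hz : IsPlan (π m) (π n) m n z) : D (m + 1) (n + 1) ≤ cost D m n z :=
  (hD.2.2.2 m n).2 ⟨z, hz, rfl⟩

theorem nonneg (hD : IsRecursiveOT π D) (i j : ℕ) : 0 ≤ D i j := by
  induction i using Nat.strong_induction_on generalizing j with
  | _ i ih =>
    rcases i with _ | i <;> rcases j with _ | j
    · rw [hD.1]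
    · rw [hD.2.1]; exact zero_le_one
    · rw [hD.2.2.1]; exact zero_le_one
    · obtain ⟨z, hz, hc⟩ := hD.exists_plan i j
      exact hc ▸ hz.cost_nonneg fun p hp q _ => ih p (Nat.lt_succ_of_le hp) q

theorem le_two (hπ : ∀ n, IsProbOn (π n) n) (hD : IsRecursiveOT π D) (i j : ℕ) :
    D i j ≤ 2 := by
  induction i using Nat.strong_induction_on generalizing j with
  | _ i ih =>
    rcases i with _ | i <;> rcases j with _ | j
    · rw [hD.1]; exact zero_le_two
    · rw [hD.2.1]; exact one_le_two
    · rw [hD.2.2.1]; exact one_le_two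
    · obtain ⟨z, hz, hc⟩ := hD.exists_plan i j
      have := hz.cost_le fun p hp q _ => ih p (Nat.lt_succ_of_le hp) q
      rwa [(hπ i).2.2, mul_one, hc] at this

theorem self_eq_zero (hπ : ∀ n, IsProbOn (π n) n) (hD : IsRecursiveOT π D) (i : ℕ) :
    D i i = 0 := by
  induction i using Nat.strong_induction_on with
  | _ i ih =>
    rcases i with _ | i
    · exact hD.1
    refine le_antisymm ?_ (hD.nonneg _ _)
    have hdiag := IsPlan.diagonal (hπ i).1 (hπ i).2.1
    refine (hD.le_cost hdiag).trans_eq (sum_eq_zero fun p hp => sum_eq_zero fun q _ => ?_)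
    dsimp only
    split_ifs with hpq
    · rw [hpq, ih q (by rw [← hpq]; exact mem_range.1 hp), mul_zero]
    · exact zero_mul _

theorem triangle (hπ : ∀ n, IsProbOn (π n) n) (hD : IsRecursiveOT π D) (a b c : ℕ) :
    D a b ≤ D a c + D c b := by
  induction a using Nat.strong_induction_on generalizing b c with
  | _ a ih =>
    rcases a with _ | a <;> rcases b with _ | b
    · rw [hD.1]; exact add_nonneg (hD.nonneg _ _) (hD.nonneg _ _)
    · rcases c with _ | c
      · rw [hD.1, zero_add]
      · rw [hD.2.1, hD.2.1]; exact le_add_of_nonneg_right (hD.nonneg _ _)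
    · rcases c with _ | c
      · rw [hD.1, add_zero]
      · rw [hD.2.2.1, hD.2.2.1]; exact le_add_of_nonneg_left (hD.nonneg _ _)
    rcases c with _ | c
    · rw [hD.2.2.1, hD.2.1, one_add_one_eq_two]; exact hD.le_two hπ _ _
    obtain ⟨x, hx, hxc⟩ := hD.exists_plan a c
    obtain ⟨y, hy, hyc⟩ := hD.exists_plan c b
    rw [← hxc, ← hyc]
    exact (hD.le_cost (isPlan_glue hx hy)).trans
      (hx.cost_glue_le hy fun p hp q _ k _ => ih p (Nat.lt_succ_of_le hp) q k)

end IsRecursiveOT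

theorem continuous_cost (D : ℕ → ℕ → ℝ) (m n : ℕ) : Continuous (cost D m n) := by
  unfold cost; fun_prop

theorem isClosed_setOf_isPlan (μ ν : ℕ → ℝ) (m n : ℕ) : IsClosed {z | IsPlan μ ν m n z} := by
  simp only [IsPlan, Set.ofPred_and, Set.ofPred_forall]
  refine ((isClosed_iInter fun i => isClosed_iInter fun j => isClosed_le ?_ ?_).inter
    ((isClosed_iInter fun i => isClosed_iInter fun j => isClosed_iInter fun _ =>
      isClosed_eq ?_ ?_).inter
    ((isClosed_iInter fun i => isClosed_iInter fun _ => isClosed_eq ?_ ?_).inter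
    (isClosed_iInter fun j => isClosed_iInter fun _ => isClosed_eq ?_ ?_)))) <;> fun_prop

theorem isCompact_setOf_isPlan (μ ν : ℕ → ℝ) (m n : ℕ) : IsCompact {z | IsPlan μ ν m n z} := by
  refine (isCompact_univ_pi fun i => isCompact_univ_pi fun _ => isCompact_Icc (a := 0)
    (b := |μ i|)).of_isClosed_subset (isClosed_setOf_isPlan μ ν m n) fun z hz => ?_
  simp only [Set.mem_pi, Set.mem_univ, Set.mem_Icc, forall_const]
  intro i j
  refine ⟨hz.1 i j, ?_⟩
  by_cases hij : z i j = 0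
  · exact hij ▸ abs_nonneg _
  · obtain ⟨hi, hj⟩ := hz.le_of_ne_zero hij
    exact (hz.le_left hi hj).trans (le_abs_self _)

def optimalPlans (μ ν : ℕ → ℝ) (m n : ℕ) (D : ℕ → ℕ → ℝ) : Set (ℕ → ℕ → ℝ) :=
  {z | IsPlan μ ν m n z ∧ ∀ w, IsPlan μ ν m n w → cost D m n z ≤ cost D m n w}

theorem isCompact_optimalPlans (μ ν : ℕ → ℝ) (m n : ℕ) (D : ℕ → ℕ → ℝ) :
    IsCompact (optimalPlans μ ν m n D) := by
  have : optimalPlans μ ν m n D =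
      {z | IsPlan μ ν m n z} ∩ ⋂ w ∈ {w | IsPlan μ ν m n w}, {z | cost D m n z ≤ cost D m n w} := by
    ext z; simp [optimalPlans]
  rw [this]
  exact (isCompact_setOf_isPlan μ ν m n).inter_right
    (isClosed_biInter fun w _ => isClosed_le (continuous_cost D m n) continuous_const)

theorem IsRecursiveOT.mem_optimalPlans_iff {π D : ℕ → ℕ → ℝ} (hD : IsRecursiveOT π D) {m n : ℕ}
    {z : ℕ → ℕ → ℝ} :
    z ∈ optimalPlans (π m) (π n) m n D ↔
      IsPlan (π m) (π n) m n z ∧ cost D m n z = D (m + 1) (n + 1) := by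
  obtain ⟨w, hw, hwc⟩ := hD.exists_plan m n
  refine ⟨fun hz => ⟨hz.1, le_antisymm (hwc ▸ hz.2 w hw) (hD.le_cost hz.1)⟩,
    fun hz => ⟨hz.1, fun w hw => hz.2 ▸ hD.le_cost hw⟩⟩

def dipole (a b : ℕ) : ℕ → ℝ := Pi.single a 1 - Pi.single b 1

theorem sum_dipole_mul {s : Finset ℕ} {a b : ℕ} (ha : a ∈ s) (hb : b ∈ s) (f : ℕ → ℝ) :
    ∑ i ∈ s, dipole a b i * f i = f a - f b := by
  simp [dipole, sub_mul, sum_sub_distrib, Pi.single_apply, ha, hb]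

theorem sum_dipole {s : Finset ℕ} {a b : ℕ} (ha : a ∈ s) (hb : b ∈ s) :
    ∑ i ∈ s, dipole a b i = 0 := by
  simpa using sum_dipole_mul ha hb 1

/-- Moves mass `ε` from the cells `(a, d)` and `(b, c)` to the cells `(a, c)` and `(b, d)`. -/
def exchange (z : ℕ → ℕ → ℝ) (ε : ℝ) (a b c d : ℕ) : ℕ → ℕ → ℝ :=
  fun i j => z i j + ε * (dipole a b i * dipole c d j)

theorem cost_exchange (C : ℕ → ℕ → ℝ) {m n : ℕ} (z : ℕ → ℕ → ℝ) (ε : ℝ) {a b c d : ℕ}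
    (ha : a ≤ m) (hb : b ≤ m) (hc : c ≤ n) (hd : d ≤ n) :
    cost C m n (exchange z ε a b c d) = cost C m n z + ε * (C a c + C b d - C a d - C b c) := by
  have hrow : ∀ i, ∑ j ∈ range (n + 1), ε * (dipole a b i * dipole c d j) * C i j
      = ε * (dipole a b i * (C i c - C i d)) := by
    intro i
    rw [← sum_dipole_mul (mem_range_succ_iff.2 hc) (mem_range_succ_iff.2 hd), mul_sum, mul_sum]
    exact sum_congr rfl fun j _ => by ring
  simp only [cost, exchange, add_mul, sum_add_distrib, hrow, ← mul_sum,
    sum_dipole_mul (mem_range_succ_iff.2 ha) (mem_range_succ_iff.2 hb)]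
  ring

theorem IsPlan.exchange {μ ν : ℕ → ℝ} {m n : ℕ} {z : ℕ → ℕ → ℝ} (hz : IsPlan μ ν m n z)
    {ε : ℝ} {a b c d : ℕ} (hab : a ≠ b) (hcd : c ≠ d) (ha : a ≤ m) (hb : b ≤ m) (hc : c ≤ n)
    (hd : d ≤ n) (hε : 0 ≤ ε) (had : ε ≤ z a d) (hbc : ε ≤ z b c) :
    IsPlan μ ν m n (exchange z ε a b c d) := by
  refine ⟨fun i j => ?_, fun i j hij => ?_, fun i hi => ?_, fun j hj => ?_⟩
  · have := hz.1 i j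
    simp only [_root_.exchange, dipole, Pi.sub_apply, Pi.single_apply]
    split_ifs <;> subst_vars <;> first | contradiction | linarith
  · have hab' : i ≠ a ∧ i ≠ b ∨ j ≠ c ∧ j ≠ d := by omega
    rcases hab' with ⟨hia, hib⟩ | ⟨hjc, hjd⟩ <;>
      simp [_root_.exchange, dipole, Pi.single_apply, hz.2.1 i j hij, *]
  · simp only [_root_.exchange, sum_add_distrib, ← mul_sum,
      sum_dipole (mem_range_succ_iff.2 hc) (mem_range_succ_iff.2 hd), hz.2.2.1 i hi]
    ring
  · simp only [_root_.exchange, sum_add_distrib, ← mul_sum, ← sum_mul,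
      sum_dipole (mem_range_succ_iff.2 ha) (mem_range_succ_iff.2 hb), hz.2.2.2 j hj]
    ring

section SecondaryCost

variable {μ ν : ℕ → ℝ} {m n : ℕ} {D C : ℕ → ℕ → ℝ} {z : ℕ → ℕ → ℝ}

theorem exchange_le_of_isMinOn (hz : z ∈ optimalPlans μ ν m n D)
    (hmin : IsMinOn (cost C m n) (optimalPlans μ ν m n D) z) {a b c d : ℕ} (hab : a ≠ b)
    (hcd : c ≠ d) (had : 0 < z a d) (hbc : 0 < z b c)
    (hD : D a c + D b d ≤ D a d + D b c) : C a d + C b c ≤ C a c + C b d := by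
  obtain ⟨ha, hd⟩ := hz.1.le_of_ne_zero had.ne'
  obtain ⟨hb, hc⟩ := hz.1.le_of_ne_zero hbc.ne'
  set ε := min (z a d) (z b c)
  have hε : 0 < ε := lt_min had hbc
  have hplan := hz.1.exchange hab hcd ha hb hc hd hε.le (min_le_left _ _) (min_le_right _ _)
  have hopt : exchange z ε a b c d ∈ optimalPlans μ ν m n D := by
    refine ⟨hplan, fun w hw => le_trans ?_ (hz.2 w hw)⟩
    rw [cost_exchange D z ε ha hb hc hd]
    nlinarith
  have := isMinOn_iff.1 hmin _ hopt
  rw [cost_exchange C z ε ha hb hc hd] at this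
  nlinarith

theorem diag_eq_min_of_isMinOn (hz : z ∈ optimalPlans μ ν m n D)
    (hmin : IsMinOn (cost C m n) (optimalPlans μ ν m n D) z) {i : ℕ} (hi : i ≤ m) (hin : i ≤ n)
    (hD : ∀ r ≤ m, ∀ c ≤ n, D i i + D r c ≤ D i c + D r i)
    (hC : ∀ r ≤ m, ∀ c ≤ n, r ≠ i → c ≠ i → C i i + C r c < C i c + C r i) :
    z i i = min (μ i) (ν i) := by
  refine le_antisymm (le_min (hz.1.le_left hi hin) (hz.1.le_right hi hin)) (not_lt.1 fun hlt => ?_)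
  obtain ⟨c, hc, hci, hic⟩ := hz.1.exists_pos_of_lt_left hi hin (hlt.trans_le (min_le_left _ _))
  obtain ⟨r, hr, hri, hri'⟩ := hz.1.exists_pos_of_lt_right hi hin (hlt.trans_le (min_le_right _ _))
  have := exchange_le_of_isMinOn hz hmin hri.symm hci.symm hic hri' (hD r hr c hc)
  linarith [hC r hr c hc hri hci]

theorem nested_of_isMinOn (hz : z ∈ optimalPlans μ ν m n D)
    (hmin : IsMinOn (cost C m n) (optimalPlans μ ν m n D) z) {i j k l : ℕ} (hij : i ≠ j)
    (hkl : k ≠ l) (hD : l ≤ n → D i l + D j k ≤ D i k + D j l)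
    (hC : C i l + C j k < C i k + C j l) : z i k = 0 ∨ z j l = 0 := by
  by_contra! h
  have hik := (hz.1.1 i k).lt_of_ne' h.1
  have hjl := (hz.1.1 j l).lt_of_ne' h.2
  have := exchange_le_of_isMinOn hz hmin hij hkl.symm hik hjl
    (hD (hz.1.le_of_ne_zero h.2).2)
  linarith

/-- The term `i * j` penalises crossing pairs; the bonus on the diagonal outweighs it on
`{0, …, N}²`. -/
def tieBreak (N i j : ℕ) : ℝ := (i : ℝ) * j - if i = j then 2 * (N : ℝ) ^ 2 + 1 else 0

theorem tieBreak_uncross (N : ℕ) {i j k l : ℕ} (hij : i < j) (hjk : j < k) (hkl : k < l) :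
    tieBreak N i l + tieBreak N j k < tieBreak N i k + tieBreak N j l := by
  have hij' : (i : ℝ) < j := by exact_mod_cast hij
  have hkl' : (k : ℝ) < l := by exact_mod_cast hkl
  simp only [tieBreak, if_neg (show i ≠ l by omega), if_neg (show j ≠ k by omega),
    if_neg (show i ≠ k by omega), if_neg (show j ≠ l by omega)]
  nlinarith [mul_pos (sub_pos.2 hij') (sub_pos.2 hkl')]

theorem tieBreak_diag {N i r c : ℕ} (hi : i ≤ N) (hr : r ≤ N) (hc : c ≤ N) (hri : r ≠ i)
    (hci : c ≠ i) : tieBreak N i i + tieBreak N r c < tieBreak N i c + tieBreak N r i := by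
  have hii : (i : ℝ) * i ≤ N ^ 2 := by rw [sq]; gcongr
  have hrc : (r : ℝ) * c ≤ N ^ 2 := by rw [sq]; gcongr
  simp only [tieBreak, if_neg hci.symm, if_neg hri]
  split_ifs <;> nlinarith [(by positivity : (0 : ℝ) ≤ i * c), (by positivity : (0 : ℝ) ≤ r * i)]

end SecondaryCost

/-- if the quadrangle inequality holds up to level `n − 1` (in shifted
indices: for all `i ≤ j ≤ k ≤ l ≤ n`), then for every `m ≤ n` the transport problem
for `d_{m,n}` admits an optimal plan that is both simple and nested. -/
theorem exists_simple_nested_optimal_plan (π D : ℕ → ℕ → ℝ)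
    (hπ : ∀ n, IsProbOn (π n) n)
    (hD : IsRecursiveOT π D)
    (n : ℕ)
    (hQ : ∀ i j k l : ℕ, i ≤ j → j ≤ k → k ≤ l → l ≤ n →
      D i l + D j k ≤ D i k + D j l) :
    ∀ m : ℕ, m ≤ n →
      ∃ z : ℕ → ℕ → ℝ, IsPlan (π m) (π n) m n z ∧
        cost D m n z = D (m + 1) (n + 1) ∧
        (∀ i, i ≤ m → z i i = min (π m i) (π n i)) ∧
        (∀ i j k l : ℕ, i < j → j < k → k < l → z i k = 0 ∨ z j l = 0) := by
  intro m hmn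
  obtain ⟨z₀, hz₀⟩ := hD.exists_plan m n
  obtain ⟨z, hz, hmin⟩ := (isCompact_optimalPlans (π m) (π n) m n D).exists_isMinOn
    ⟨z₀, hD.mem_optimalPlans_iff.2 hz₀⟩ (continuous_cost (tieBreak n) m n).continuousOn
  obtain ⟨hplan, hcost⟩ := hD.mem_optimalPlans_iff.1 hz
  refine ⟨z, hplan, hcost, fun i hi => ?_, fun i j k l hij hjk hkl => ?_⟩
  · refine diag_eq_min_of_isMinOn hz hmin hi (hi.trans hmn) (fun r _ c _ => ?_)
      fun r hr c hc => tieBreak_diag (hi.trans hmn) (hr.trans hmn) hc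
    rw [hD.self_eq_zero hπ, zero_add, add_comm]
    exact hD.triangle hπ r c i
  · exact nested_of_isMinOn hz hmin hij.ne hkl.ne
      (hQ i j k l hij.le hjk.le hkl.le) (tieBreak_uncross n hij hjk hkl)
end

section
/- If β_n = n/(n+2), then R_n defined by the recursion R_n = (1 − β_n)^2 + β_n R_{n-1} with R_0 = 1 satisfies R_n = (4/(n+1))·(1 − H_{n+2}/(n+2)), where H_n is the n-th harmonic number; in particular R_n ≤ 4/(n+1). -/
/-- if `β_n = n/(n+2)` and `R_0 = 1`,
`R_n = (1 − β_n)² + β_n R_{n-1}`, then `R_n = (4/(n+1))·(1 − H_{n+2}/(n+2))` where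
`H_n = Σ_{k=1}^n 1/k`; in particular `R_n ≤ 4/(n+1)`. -/
theorem halpern_modified_rate (β R : ℕ → ℝ)
    (hβ : ∀ n : ℕ, β n = (n : ℝ) / (n + 2))
    (hR0 : R 0 = 1)
    (hrec : ∀ n : ℕ, R (n + 1) = (1 - β (n + 1)) ^ 2 + β (n + 1) * R n) :
    ∀ n : ℕ,
      R n = (4 / (n + 1 : ℝ)) *
          (1 - (∑ k ∈ Finset.Icc 1 (n + 2), (1 : ℝ) / k) / (n + 2)) ∧
      R n ≤ 4 / (n + 1 : ℝ) := by
  have key : ∀ n : ℕ, R n = (4 / (n + 1 : ℝ)) *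
      (1 - (∑ k ∈ Finset.Icc 1 (n + 2), (1 : ℝ) / k) / (n + 2)) := by
    intro n
    induction n with
    | zero =>
      rw [hR0]
      norm_num [Finset.sum_Icc_succ_top]
    | succ n ih =>
      rw [hrec, hβ, ih]
      have hsum : (∑ k ∈ Finset.Icc 1 (n + 1 + 2), (1:ℝ)/(k:ℝ)) =
          (∑ k ∈ Finset.Icc 1 (n + 2), (1:ℝ)/(k:ℝ)) + 1/((n:ℝ)+3) := by
        rw [show n+1+2 = (n+2)+1 from rfl, Finset.sum_Icc_succ_top (by omega)]
        push_cast; ring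
      rw [hsum]
      push_cast
      have h1 : (n:ℝ)+1 ≠ 0 := by positivity
      have h2 : (n:ℝ)+2 ≠ 0 := by positivity
      have h3 : (n:ℝ)+3 ≠ 0 := by positivity
      field_simp
      ring
  intro n
  refine ⟨key n, ?_⟩
  rw [key n]
  have hpos : (0:ℝ) < (n:ℝ)+1 := by positivity
  have hH : 0 ≤ (∑ k ∈ Finset.Icc 1 (n + 2), (1 : ℝ) / k) / ((n:ℝ)+2) := by positivity
  have h4 : 0 < 4/((n:ℝ)+1) := by positivity
  nlinarith [mul_nonneg h4.le hH]
end
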